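/- arXiv:2312.15343 — 4 statements merged into one kernel-verified Lean document; each statement's English description precedes it below -/
import Mathlib

section
/- Let $k_1 < k_2$ be coprime positive integers and let $r_1, r_2, \theta_1, \theta_2 \in \mathbb{R}$ with $r_1 r_2 \neq 0$. If the function $v(x) = r_1\cos(k_1(x+\theta_1)) + r_2\cos(k_2(x+\theta_2))$ satisfies $v(a+x) = v(a-x)$ for all $x \in \mathbb{R}$ for some $a \in \mathbb{R}$, then $\theta_1 - \theta_2 \in \frac{\pi}{k_1 k_2}\mathbb{Z}$, i.e., there exists $n \in \mathbb{Z}$ with $\theta_1 - \theta_2 = \frac{n\pi}{k_1 k_2}$. -/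
open Real

theorem stmt_0 (k1 k2 : ℕ) (hk1 : 0 < k1) (hk12 : k1 < k2)
    (hcop : Nat.Coprime k1 k2) (r1 r2 θ1 θ2 : ℝ) (hr : r1 * r2 ≠ 0)
    (v : ℝ → ℝ)
    (hv : ∀ x, v x = r1 * Real.cos (k1 * (x + θ1)) + r2 * Real.cos (k2 * (x + θ2)))
    (a : ℝ) (hsym : ∀ x, v (a + x) = v (a - x)) :
    ∃ n : ℤ, θ1 - θ2 = n * π / (k1 * k2) := by
  have hk2 : 0 < k2 := hk1.trans hk12
  have hk1r : (0:ℝ) < k1 := by exact_mod_cast hk1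
  have hk2r : (0:ℝ) < k2 := by exact_mod_cast hk2
  have h12r : (k1:ℝ) < k2 := by exact_mod_cast hk12
  obtain ⟨hr1, hr2⟩ := mul_ne_zero_iff.1 hr
  set c1 := r1 * Real.sin (k1 * (a + θ1)) with hc1
  set c2 := r2 * Real.sin (k2 * (a + θ2)) with hc2
  have key : ∀ x : ℝ, c1 * Real.sin (k1 * x) + c2 * Real.sin (k2 * x) = 0 := by
    intro x
    have h := hsym x
    rw [hv, hv] at h
    have e1 : (k1:ℝ) * (a + x + θ1) = k1 * (a + θ1) + k1 * x := by ring
    have e2 : (k1:ℝ) * (a - x + θ1) = k1 * (a + θ1) - k1 * x := by ring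
    have e3 : (k2:ℝ) * (a + x + θ2) = k2 * (a + θ2) + k2 * x := by ring
    have e4 : (k2:ℝ) * (a - x + θ2) = k2 * (a + θ2) - k2 * x := by ring
    rw [e1, e2, e3, e4, Real.cos_add, Real.cos_sub, Real.cos_add, Real.cos_sub] at h
    rw [hc1, hc2]
    linarith [h]
  have hc1z : c1 = 0 := by
    have h := key (π / k2)
    have e : (k2:ℝ) * (π / k2) = π := by field_simp
    rw [e, Real.sin_pi, mul_zero, add_zero] at h
    have hs : 0 < Real.sin (k1 * (π / k2)) := by
      apply Real.sin_pos_of_pos_of_lt_pi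
      · positivity
      · calc (k1:ℝ) * (π / k2) < k2 * (π / k2) := by
              apply mul_lt_mul_of_pos_right h12r
              positivity
          _ = π := e
    exact (mul_eq_zero.1 h).resolve_right (ne_of_gt hs)
  have hc2z : c2 = 0 := by
    have h := key (π / (2 * k2))
    have e : (k2:ℝ) * (π / (2 * k2)) = π / 2 := by field_simp
    rw [e, Real.sin_pi_div_two, mul_one, hc1z, zero_mul, zero_add] at h
    exact h
  have hs1 : Real.sin (k1 * (a + θ1)) = 0 := by
    rcases mul_eq_zero.1 hc1z with h | h
    · exact absurd h hr1
    · exact h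
  have hs2 : Real.sin (k2 * (a + θ2)) = 0 := by
    rcases mul_eq_zero.1 hc2z with h | h
    · exact absurd h hr2
    · exact h
  obtain ⟨m, hm⟩ := Real.sin_eq_zero_iff.1 hs1
  obtain ⟨n, hn⟩ := Real.sin_eq_zero_iff.1 hs2
  refine ⟨m * k2 - n * k1, ?_⟩
  have hk1ne : (k1:ℝ) ≠ 0 := ne_of_gt hk1r
  have hk2ne : (k2:ℝ) ≠ 0 := ne_of_gt hk2r
  field_simp
  push_cast
  linear_combination -(k2:ℝ) * hm + (k1:ℝ) * hn
end

section
/- Let $v : \mathbb{R} \to \mathbb{R}$ be a $C^3$ function, $v(x) = r_1\cos(k_1(x+\theta_1)) + r_2\cos(k_2(x+\theta_2))$ with $r_1 r_2 \neq 0$ and $k_1 \neq k_2$ positive integers. If $v$ is symmetric about some point $a$ (i.e., $v(a+x)=v(a-x)$ for all $x$), then $\sin(k_1(a+\theta_1)) = 0$ and $\sin(k_2(a+\theta_2)) = 0$. -/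
/-!
By symmetry, `x ↦ v (a + x) - v (a - x) = -2 ∑ rᵢ sin (kᵢ (a + θᵢ)) sin (kᵢ x)` vanishes
identically. Its first and third derivatives at `0` give `c₁ k₁ + c₂ k₂ = 0` and
`c₁ k₁³ + c₂ k₂³ = 0` for the coefficients `cᵢ = rᵢ sin (kᵢ (a + θᵢ))`, and `k₁² ≠ k₂²`
forces both to vanish.
-/

open Real

lemma cos_mul_add_sub_cos_mul_sub (k b x : ℝ) :
    cos (k * (b + x)) - cos (k * (b - x)) = -2 * sin (k * b) * sin (k * x) := by
  rw [mul_add, mul_sub, cos_add, cos_sub]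
  ring

section SineCombination

variable {c₁ c₂ k₁ k₂ : ℝ}

lemma sin_comb_deriv_eq_zero (h : ∀ x, c₁ * sin (k₁ * x) + c₂ * sin (k₂ * x) = 0) (x : ℝ) :
    c₁ * k₁ * cos (k₁ * x) + c₂ * k₂ * cos (k₂ * x) = 0 := by
  have hd : HasDerivAt (fun x => c₁ * sin (k₁ * x) + c₂ * sin (k₂ * x))
      (c₁ * (cos (k₁ * x) * k₁) + c₂ * (cos (k₂ * x) * k₂)) x :=
    (((hasDerivAt_const_mul k₁).sin.const_mul c₁).add ((hasDerivAt_const_mul k₂).sin.const_mul c₂))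
  rw [funext h] at hd
  linear_combination hd.unique (hasDerivAt_const x 0)

lemma cos_comb_deriv_eq_zero (h : ∀ x, c₁ * cos (k₁ * x) + c₂ * cos (k₂ * x) = 0) (x : ℝ) :
    c₁ * k₁ * sin (k₁ * x) + c₂ * k₂ * sin (k₂ * x) = 0 := by
  have hd : HasDerivAt (fun x => c₁ * cos (k₁ * x) + c₂ * cos (k₂ * x))
      (c₁ * (-sin (k₁ * x) * k₁) + c₂ * (-sin (k₂ * x) * k₂)) x :=
    (((hasDerivAt_const_mul k₁).cos.const_mul c₁).add ((hasDerivAt_const_mul k₂).cos.const_mul c₂))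
  rw [funext h] at hd
  linear_combination -hd.unique (hasDerivAt_const x 0)

theorem eq_zero_of_sin_comb_eq_zero (hk₁ : k₁ ≠ 0) (hk₂ : k₂ ≠ 0) (hk : k₁ ^ 2 ≠ k₂ ^ 2)
    (h : ∀ x, c₁ * sin (k₁ * x) + c₂ * sin (k₂ * x) = 0) : c₁ = 0 ∧ c₂ = 0 := by
  have h₁ := sin_comb_deriv_eq_zero h
  have h₃ := sin_comb_deriv_eq_zero (cos_comb_deriv_eq_zero h₁)
  have first : c₁ * k₁ + c₂ * k₂ = 0 := by simpa using h₁ 0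
  have third : c₁ * k₁ ^ 3 + c₂ * k₂ ^ 3 = 0 := by
    have := h₃ 0
    simp only [mul_zero, cos_zero, mul_one] at this
    linear_combination this
  have hc₁ : c₁ = 0 := by
    have : c₁ * k₁ * (k₁ ^ 2 - k₂ ^ 2) = 0 := by linear_combination third - k₂ ^ 2 * first
    simpa [hk₁, sub_eq_zero, hk] using this
  refine ⟨hc₁, ?_⟩
  simpa [hc₁, hk₂] using first

end SineCombination

theorem stmt_2 (k1 k2 : ℕ) (hk1 : 0 < k1) (hk2 : 0 < k2) (hne : k1 ≠ k2)
    (r1 r2 θ1 θ2 : ℝ) (hr : r1 * r2 ≠ 0)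
    (v : ℝ → ℝ)
    (hv : ∀ x, v x = r1 * Real.cos (k1 * (x + θ1)) + r2 * Real.cos (k2 * (x + θ2)))
    (a : ℝ) (hsym : ∀ x, v (a + x) = v (a - x)) :
    Real.sin (k1 * (a + θ1)) = 0 ∧ Real.sin (k2 * (a + θ2)) = 0 := by
  have hodd : ∀ x, r1 * sin (k1 * (a + θ1)) * sin (k1 * x)
      + r2 * sin (k2 * (a + θ2)) * sin (k2 * x) = 0 := by
    intro x
    have h := hsym x
    simp only [hv, add_right_comm a x, sub_add_eq_add_sub] at h
    linear_combination (-1 / 2 : ℝ) * h + (r1 / 2) * cos_mul_add_sub_cos_mul_sub k1 (a + θ1) x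
      + (r2 / 2) * cos_mul_add_sub_cos_mul_sub k2 (a + θ2) x
  have hk : (k1 : ℝ) ^ 2 ≠ (k2 : ℝ) ^ 2 := by
    norm_cast
    exact (Nat.pow_left_injective two_ne_zero).ne hne
  obtain ⟨h1, h2⟩ := eq_zero_of_sin_comb_eq_zero (by positivity) (by positivity) hk hodd
  exact ⟨(mul_eq_zero.1 h1).resolve_left (left_ne_zero_of_mul hr),
    (mul_eq_zero.1 h2).resolve_left (right_ne_zero_of_mul hr)⟩
end

section
/- For every $T \geq \frac{1}{3}$, the function $m_T(\xi) = \sqrt{\frac{(1+T\xi^2)\tanh\xi}{\xi}}$ (extended by $m_T(0)=1$) is strictly increasing on $(0,\infty)$. -/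
open Real Set

/-! The derivative of `(1 + T ξ²) tanh ξ / ξ = (1 + T ξ²) sinh ξ / (ξ cosh ξ)` has the sign of
`(T ξ² - 1) sinh ξ cosh ξ + ξ + T ξ³`, which increases with `T`. At `T = 1/3` and `y = 2ξ` it
equals `h y / 24`, where `h y = 12 y + y³ - (12 - y²) sinh y` vanishes at `0` together with
`h'`, `h''`, `h'''`, while `h'''' y = y² sinh y + 8 y cosh y > 0` for `y > 0`. -/

lemma pos_of_hasDerivAt_of_pos {f f' : ℝ → ℝ} {a : ℝ} (hf : ∀ x, HasDerivAt f (f' x) x)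
    (ha : f a = 0) (hf' : ∀ x, a < x → 0 < f' x) : ∀ x, a < x → 0 < f x := by
  intro x hx
  have hmono : StrictMonoOn f (Ici a) :=
    strictMonoOn_of_hasDerivWithinAt_pos (convex_Ici a)
      (fun y _ ↦ (hf y).continuousAt.continuousWithinAt) (fun y _ ↦ (hf y).hasDerivWithinAt)
      (fun y hy ↦ hf' y (by simpa using hy))
  simpa [ha] using hmono self_mem_Ici hx.le hx

lemma twelve_sub_sq_mul_sinh_lt {y : ℝ} (hy : 0 < y) :
    (12 - y ^ 2) * sinh y < 12 * y + y ^ 3 := by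
  have hD3 : ∀ x, 0 < x → 0 < 6 + 6 * x * sinh x + (x ^ 2 - 6) * cosh x := by
    refine pos_of_hasDerivAt_of_pos
      (f' := fun x ↦ x ^ 2 * sinh x + 8 * x * cosh x) (fun x ↦ ?_) (by simp) (fun x hx ↦ ?_)
    · refine (((hasDerivAt_id' x).const_mul 6 |>.mul (hasDerivAt_sinh x)).const_add 6 |>.add
        ((hasDerivAt_pow 2 x).sub_const 6 |>.mul (hasDerivAt_cosh x))).congr_deriv ?_
      ring
    · positivity
  have hD2 : ∀ x, 0 < x → 0 < 6 * x + 4 * x * cosh x + (x ^ 2 - 10) * sinh x := by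
    refine pos_of_hasDerivAt_of_pos (fun x ↦ ?_) (by simp) hD3
    refine (((hasDerivAt_id' x).const_mul 6).add ((hasDerivAt_id' x).const_mul 4 |>.mul
      (hasDerivAt_cosh x)) |>.add ((hasDerivAt_pow 2 x).sub_const 10 |>.mul
      (hasDerivAt_sinh x))).congr_deriv ?_
    ring
  have hD1 : ∀ x, 0 < x → 0 < 12 + 3 * x ^ 2 + 2 * x * sinh x - (12 - x ^ 2) * cosh x := by
    refine pos_of_hasDerivAt_of_pos (fun x ↦ ?_) (by simp) hD2
    refine (((hasDerivAt_pow 2 x).const_mul 3).const_add 12 |>.add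
      ((hasDerivAt_id' x).const_mul 2 |>.mul (hasDerivAt_sinh x)) |>.sub
      ((hasDerivAt_pow 2 x).const_sub 12 |>.mul (hasDerivAt_cosh x))).congr_deriv ?_
    ring
  have hD0 : ∀ x, 0 < x → 0 < 12 * x + x ^ 3 - (12 - x ^ 2) * sinh x := by
    refine pos_of_hasDerivAt_of_pos (fun x ↦ ?_) (by simp) hD1
    refine (((hasDerivAt_id' x).const_mul 12).add (hasDerivAt_pow 3 x) |>.sub
      ((hasDerivAt_pow 2 x).const_sub 12 |>.mul (hasDerivAt_sinh x))).congr_deriv ?_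
    ring
  linarith [hD0 y hy]

lemma sq_sub_one_mul_sinh_mul_cosh_add_pos {T x : ℝ} (hT : 1 / 3 ≤ T) (hx : 0 < x) :
    0 < (T * x ^ 2 - 1) * (sinh x * cosh x) + (x + T * x ^ 3) := by
  have hsinh := twelve_sub_sq_mul_sinh_lt (mul_pos two_pos hx)
  rw [sinh_two_mul] at hsinh
  have hexcess : 0 ≤ (T - 1 / 3) * (x ^ 2 * (sinh x * cosh x) + x ^ 3) := by
    have : 0 ≤ T - 1 / 3 := by linarith
    positivity
  nlinarith

lemma strictMonoOn_one_add_mul_sq_mul_tanh_div {T : ℝ} (hT : 1 / 3 ≤ T) :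
    StrictMonoOn (fun ξ ↦ (1 + T * ξ ^ 2) * tanh ξ / ξ) (Ioi 0) := by
  have hfun : (fun ξ ↦ (1 + T * ξ ^ 2) * tanh ξ / ξ) =
      fun ξ ↦ (1 + T * ξ ^ 2) * sinh ξ / (cosh ξ * ξ) := by
    ext ξ; rw [tanh_eq_sinh_div_cosh, mul_div_assoc', div_div]
  rw [hfun]
  refine strictMonoOn_of_hasDerivWithinAt_pos (convex_Ioi 0)
    (f' := fun x ↦ ((T * x ^ 2 - 1) * (sinh x * cosh x) + (x + T * x ^ 3)) / (cosh x * x) ^ 2)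
    (fun x hx ↦ ?_) (fun x hx ↦ ?_) (fun x hx ↦ ?_)
  · have : 0 < x := hx
    fun_prop (disch := positivity)
  · rw [interior_Ioi] at hx ⊢
    have hx : 0 < x := hx
    have hnum := ((hasDerivAt_pow 2 x).const_mul T).const_add 1 |>.mul (hasDerivAt_sinh x)
    have hden := (hasDerivAt_cosh x).mul (hasDerivAt_id' x)
    refine (hnum.div hden (mul_pos (cosh_pos x) hx).ne').hasDerivWithinAt.congr_deriv ?_
    simp only [Pi.mul_apply]
    congr 1
    linear_combination (x + T * x ^ 3) * cosh_sq_sub_sinh_sq x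
  · rw [interior_Ioi] at hx
    have hx : 0 < x := hx
    exact div_pos (sq_sub_one_mul_sinh_mul_cosh_add_pos hT hx) (by positivity)

theorem stmt_3 (T : ℝ) (hT : 1 / 3 ≤ T) :
    StrictMonoOn (fun ξ : ℝ => Real.sqrt ((1 + T * ξ ^ 2) * Real.tanh ξ / ξ))
      (Set.Ioi (0 : ℝ)) := by
  refine strictMonoOn_sqrt.comp (strictMonoOn_one_add_mul_sq_mul_tanh_div hT) fun ξ hξ ↦ ?_
  have : 0 < ξ := hξ
  rw [mem_Ici, tanh_eq_sinh_div_cosh]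
  positivity
end

section
/- Suppose for some $T \in (0,\frac{1}{3})$ there is $\xi_T \in (0,\infty)$ such that the symbol $m_T$ is strictly decreasing on $(0,\xi_T)$ and strictly increasing on $(\xi_T,\infty)$. Then for any positive integers $k_1 < k_2$ there exists a unique $\kappa_0 > 0$ with $m_T(\kappa_0 k_1) = m_T(\kappa_0 k_2)$; moreover, $\kappa_0 \in (\xi_T/k_2, \xi_T/k_1)$. -/
open Real Set

theorem stmt_6 (T : ℝ) (hT : T ∈ Set.Ioo (0 : ℝ) (1 / 3))
    (mT : ℝ → ℝ)
    (hm : ∀ ξ : ℝ, 0 < ξ → mT ξ = Real.sqrt ((1 + T * ξ ^ 2) * Real.tanh ξ / ξ))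
    (ξT : ℝ) (hξT : 0 < ξT)
    (hanti : StrictAntiOn mT (Set.Ioc 0 ξT))
    (hmono : StrictMonoOn mT (Set.Ici ξT))
    (k1 k2 : ℕ) (hk1 : 0 < k1) (hk12 : k1 < k2) :
    ∃ κ0 : ℝ, 0 < κ0 ∧ mT (κ0 * k1) = mT (κ0 * k2) ∧
      κ0 ∈ Set.Ioo (ξT / k2) (ξT / k1) ∧
      ∀ κ : ℝ, 0 < κ → mT (κ * k1) = mT (κ * k2) → κ = κ0 := by
  have hk1R : (0:ℝ) < k1 := by exact_mod_cast hk1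
  have hk2R : (0:ℝ) < k2 := by exact_mod_cast hk1.trans hk12
  have hkR : (k1:ℝ) < k2 := by exact_mod_cast hk12
  set a := ξT / (k2:ℝ) with ha
  set b := ξT / (k1:ℝ) with hb
  have ha0 : 0 < a := div_pos hξT hk2R
  have hb0 : 0 < b := div_pos hξT hk1R
  have hab : a < b := by
    rw [ha, hb, div_lt_div_iff₀ hk2R hk1R]
    nlinarith
  -- key characterization of solutions
  have key : ∀ κ : ℝ, 0 < κ → mT (κ * k1) = mT (κ * k2) →
      κ * k1 < ξT ∧ ξT < κ * k2 := by
    intro κ hκ heq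
    have hx : 0 < κ * k1 := mul_pos hκ hk1R
    have hxy : κ * k1 < κ * k2 := mul_lt_mul_of_pos_left hkR hκ
    rcases lt_or_ge (κ * k1) ξT with h1 | h1
    · rcases le_or_gt (κ * k2) ξT with h2 | h2
      · exfalso
        have := hanti ⟨hx, h1.le⟩ ⟨hx.trans hxy, h2⟩ hxy
        linarith
      · exact ⟨h1, h2⟩
    · exfalso
      have := hmono h1 (h1.trans hxy.le) hxy
      linarith
  -- no two distinct solutions
  have step : ∀ κ κ' : ℝ, 0 < κ → 0 < κ' →
      mT (κ * k1) = mT (κ * k2) → mT (κ' * k1) = mT (κ' * k2) → κ < κ' → False := by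
    intro κ κ' hκ hκ' h h' hlt
    obtain ⟨c1, c2⟩ := key κ hκ h
    obtain ⟨c1', c2'⟩ := key κ' hκ' h'
    have e1 : mT (κ' * k1) < mT (κ * k1) :=
      hanti ⟨mul_pos hκ hk1R, c1.le⟩ ⟨mul_pos hκ' hk1R, c1'.le⟩
        (mul_lt_mul_of_pos_right hlt hk1R)
    have e2 : mT (κ * k2) < mT (κ' * k2) :=
      hmono c2.le c2'.le (mul_lt_mul_of_pos_right hlt hk2R)
    linarith
  -- continuity of mT on positive reals
  have hmTcont : ContinuousOn mT (Ioi (0:ℝ)) := by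
    have hf : ContinuousOn (fun x : ℝ => Real.sqrt ((1 + T * x ^ 2) * Real.tanh x / x))
        (Ioi (0:ℝ)) := by
      apply ContinuousOn.sqrt
      apply ContinuousOn.div
      · have htanh : Continuous Real.tanh := by
          have h : Real.tanh = fun x => Real.sinh x / Real.cosh x :=
            funext fun x => Real.tanh_eq_sinh_div_cosh x
          rw [h]
          exact Real.continuous_sinh.div Real.continuous_cosh fun x => (Real.cosh_pos x).ne'
        exact (((continuous_const.add (continuous_const.mul (continuous_pow 2))).mul htanh)).continuousOn
      · exact continuousOn_id
      · intro x hx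
        exact ne_of_gt hx
    exact hf.congr fun x hx => hm x hx
  have hc : ∀ c : ℝ, 0 < c → ContinuousOn (fun κ : ℝ => mT (κ * c)) (Icc a b) := by
    intro c hcpos
    apply hmTcont.comp ((continuous_id.mul continuous_const).continuousOn)
    intro κ hκ
    exact mul_pos (lt_of_lt_of_le ha0 hκ.1) hcpos
  have hg : ContinuousOn (fun κ : ℝ => mT (κ * k2) - mT (κ * k1)) (Icc a b) :=
    (hc (k2:ℝ) hk2R).sub (hc (k1:ℝ) hk1R)
  have hak2 : a * (k2:ℝ) = ξT := div_mul_cancel₀ ξT (ne_of_gt hk2R)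
  have hbk1 : b * (k1:ℝ) = ξT := div_mul_cancel₀ ξT (ne_of_gt hk1R)
  have hak1 : a * (k1:ℝ) < ξT := by
    rw [← hak2]; exact mul_lt_mul_of_pos_left hkR ha0
  have hbk2 : ξT < b * (k2:ℝ) := by
    rw [← hbk1]; exact mul_lt_mul_of_pos_left hkR hb0
  have hga : mT (a * k2) - mT (a * k1) < 0 := by
    have := hanti ⟨mul_pos ha0 hk1R, hak1.le⟩ ⟨hξT, le_refl ξT⟩ hak1
    rw [hak2]; linarith
  have hgb : 0 < mT (b * k2) - mT (b * k1) := by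
    have := hmono (le_refl ξT) hbk2.le hbk2
    rw [hbk1]; linarith
  have h0 : (0:ℝ) ∈ Ioo (mT (a * k2) - mT (a * k1)) (mT (b * k2) - mT (b * k1)) :=
    ⟨hga, hgb⟩
  obtain ⟨κ0, hκ0mem, hκ0eq⟩ := intermediate_value_Ioo hab.le hg h0
  have hκ0pos : 0 < κ0 := ha0.trans hκ0mem.1
  have heq0 : mT (κ0 * k1) = mT (κ0 * k2) := by
    have : mT (κ0 * k2) - mT (κ0 * k1) = 0 := hκ0eq
    linarith
  refine ⟨κ0, hκ0pos, heq0, hκ0mem, ?_⟩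
  intro κ hκ heq
  rcases lt_trichotomy κ κ0 with h | h | h
  · exact absurd (step κ κ0 hκ hκ0pos heq heq0 h) not_false
  · exact h
  · exact absurd (step κ0 κ hκ0pos hκ heq0 heq h) not_false
end
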